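/- arXiv:2205.07266 — 2 statements merged into one kernel-verified Lean document; each statement's English description precedes it below -/
import Mathlib

section
/- Symmetry property: if two distinct variables i, j ∈ N satisfy f(S∪{i}) = f(S∪{j}) for all S ⊆ N∖{i,j}, then for every order m and every k ∈ N with k ≠ i and k ≠ j, I^(m)(i,k) = I^(m)(j,k). -/
/-!
Symmetry of `i` and `j` means that `f` is invariant under the transposition `σ = (i j)` acting on
coalitions, while relabelling players by any permutation `e` transforms the interaction index
equivariantly: the index of `f ∘ e` at `(i, k)` is that of `f` at `(e i, e k)`. Applied to `σ`,
which fixes `k`, this gives `I(i, k) = I(σ i, σ k) = I(j, k)`.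
-/

open Finset

/-- The m-th order multi-order interaction between players `i` and `j` for a game `f`. -/
noncomputable def interaction {N : Type*} [Fintype N] [DecidableEq N]
    (f : Finset N → ℝ) (m : ℕ) (i j : N) : ℝ :=
  ((Fintype.card N - 2).choose m : ℝ)⁻¹ *
    ∑ S ∈ ((Finset.univ \ {i, j} : Finset N).powersetCard m),
      (f (S ∪ {i, j}) - f (S ∪ {i}) - f (S ∪ {j}) + f S)

section SwapInvariance

variable {α β : Type*} [DecidableEq α] {i j : α}

theorem map_swap_of_notMem {S : Finset α} (hi : i ∉ S) (hj : j ∉ S) :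
    S.map (Equiv.swap i j).toEmbedding = S := by
  ext a
  rw [mem_map_equiv, Equiv.symm_swap]
  by_cases hai : a = i
  · simp [hai, hi, hj]
  by_cases haj : a = j
  · simp [haj, hi, hj]
  rw [Equiv.swap_apply_of_ne_of_ne hai haj]

theorem map_swap_of_mem {S : Finset α} (hi : i ∈ S) (hj : j ∈ S) :
    S.map (Equiv.swap i j).toEmbedding = S := by
  refine map_perm fun a ha => ?_
  obtain ⟨-, rfl | rfl⟩ := Equiv.swap_apply_ne_self_iff.mp ha <;> assumption

theorem apply_map_swap_of_mem_of_notMem {f : Finset α → β}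
    (hsym : ∀ S : Finset α, i ∉ S → j ∉ S → f (insert i S) = f (insert j S))
    {T : Finset α} (hi : i ∈ T) (hj : j ∉ T) :
    f (T.map (Equiv.swap i j).toEmbedding) = f T := by
  have hiS : i ∉ T.erase i := notMem_erase i T
  have hjS : j ∉ T.erase i := fun h => hj (mem_of_mem_erase h)
  rw [← insert_erase hi, map_insert, Equiv.toEmbedding_apply, Equiv.swap_apply_left,
    map_swap_of_notMem hiS hjS]
  exact (hsym _ hiS hjS).symm

theorem apply_map_swap_eq {f : Finset α → β}
    (hsym : ∀ S : Finset α, i ∉ S → j ∉ S → f (insert i S) = f (insert j S)) (T : Finset α) :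
    f (T.map (Equiv.swap i j).toEmbedding) = f T := by
  by_cases hi : i ∈ T <;> by_cases hj : j ∈ T
  · rw [map_swap_of_mem hi hj]
  · exact apply_map_swap_of_mem_of_notMem hsym hi hj
  · rw [Equiv.swap_comm]
    exact apply_map_swap_of_mem_of_notMem (fun S hj hi => (hsym S hi hj).symm) hj hi
  · rw [map_swap_of_notMem hi hj]

end SwapInvariance

theorem interaction_comp_map_equiv {N : Type*} [Fintype N] [DecidableEq N]
    (f : Finset N → ℝ) (e : N ≃ N) (m : ℕ) (i k : N) :
    interaction (fun S => f (S.map e.toEmbedding)) m i k = interaction f m (e i) (e k) := by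
  have hcompl : (univ \ {i, k}).map e.toEmbedding = univ \ {e i, e k} := by
    simp [Finset.map_sdiff, Finset.map_insert]
  rw [interaction, interaction, ← hcompl, powersetCard_map, sum_map]
  simp [Finset.map_insert]

theorem interaction_symmetry_general {N : Type*} [Fintype N] [DecidableEq N]
    (f : Finset N → ℝ) (i j : N)
    (hsym : ∀ S : Finset N, i ∉ S → j ∉ S → f (S ∪ {i}) = f (S ∪ {j})) :
    ∀ (m : ℕ), m ≤ Fintype.card N - 2 → ∀ k : N, k ≠ i → k ≠ j →
      interaction f m i k = interaction f m j k := by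
  intro m _ k hki hkj
  have hswap : (fun S => f (S.map (Equiv.swap i j).toEmbedding)) = f :=
    funext <| apply_map_swap_eq fun S hi hj => by simpa only [union_singleton] using hsym S hi hj
  calc interaction f m i k
      = interaction (fun S => f (S.map (Equiv.swap i j).toEmbedding)) m i k := by rw [hswap]
    _ = interaction f m (Equiv.swap i j i) (Equiv.swap i j k) := interaction_comp_map_equiv ..
    _ = interaction f m j k := by
        rw [Equiv.swap_apply_left, Equiv.swap_apply_of_ne_of_ne hki hkj]

theorem interaction_symmetry {N : Type*} [Fintype N] [DecidableEq N]
    (f : Finset N → ℝ) (i j : N) (hij : i ≠ j)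
    (hsym : ∀ S : Finset N, i ∉ S → j ∉ S → f (S ∪ {i}) = f (S ∪ {j})) :
    ∀ (m : ℕ), m ≤ Fintype.card N - 2 → ∀ k : N, k ≠ i → k ≠ j →
      interaction f m i k = interaction f m j k :=
  interaction_symmetry_general f i j hsym
end

section
/- Efficiency property: for any game f on N with |N| = n ≥ 2, the total output decomposes as f(N) − f(∅) = Σ_{i∈N} μ_i + Σ_{i≠j} Σ_{m=0}^{n−2} w^(m) · I^(m)(i,j), where μ_i = f({i}) − f(∅) and w^(m) = (n−1−m)/(n(n−1)). -/
/-! Write `g k` for the average of `f` over the `k`-element coalitions. Double counting the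
triples `(i, j, S)` shows that the order-`m` interactions, summed over all ordered pairs, add up
to `n (n - 1) (g (m + 2) - 2 g (m + 1) + g m)`. The weight `w^(m)` turns this into
`(n - 1 - m)` times a second difference of `g`, and summation by parts collapses
`∑ₘ (n - 1 - m) Δ²g m` to `g n - n g 1 + (n - 1) g 0 = f N - ∑ᵢ f {i} + (n - 1) f ∅`. -/

open Finset

section DoubleCounting

variable {α β M : Type*} [AddCommMonoid M]

theorem sum_sum_filter_eq_sum_card_nsmul (A : Finset α) (P : Finset β) (r : α → β → Prop)
    [∀ a b, Decidable (r a b)] (h : β → M) :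
    ∑ a ∈ A, ∑ b ∈ P with r a b, h b = ∑ b ∈ P, #{a ∈ A | r a b} • h b := by
  rw [sum_comm' (t' := P) (s' := fun b => {a ∈ A | r a b}) fun a b => by
    simp only [mem_filter]; tauto]
  exact sum_congr rfl fun b _ => sum_const _

variable [DecidableEq α]

theorem sdiff_pair_eq_erase_erase (A : Finset α) (i j : α) : A \ {i, j} = (A.erase i).erase j := by
  rw [sdiff_insert, sdiff_singleton_eq_erase, erase_right_comm]

theorem sum_sum_erase_comm (A : Finset α) (φ : α → α → M) :
    ∑ i ∈ A, ∑ j ∈ A.erase i, φ i j = ∑ i ∈ A, ∑ j ∈ A.erase i, φ j i :=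
  sum_comm' fun i j => by simp only [mem_erase]; tauto

theorem powersetCard_erase_eq_filter (A : Finset α) (i : α) (m : ℕ) :
    (A.erase i).powersetCard m = {S ∈ A.powersetCard m | i ∉ S} := by
  ext S
  simp only [mem_powersetCard, mem_filter, subset_erase]
  tauto

theorem sum_powersetCard_erase_insert (A : Finset α) {i : α} (hi : i ∈ A) (m : ℕ)
    (h : Finset α → M) :
    ∑ S ∈ (A.erase i).powersetCard m, h (insert i S)
      = ∑ T ∈ A.powersetCard (m + 1) with i ∈ T, h T := by
  refine sum_nbij' (insert i) (·.erase i) ?_ ?_ ?_ ?_ (fun _ _ => rfl)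
  · intro S hS
    simp only [mem_powersetCard, subset_erase, mem_filter] at hS ⊢
    exact ⟨⟨insert_subset hi hS.1.1, by rw [card_insert_of_notMem hS.1.2, hS.2]⟩,
      mem_insert_self i S⟩
  · intro T hT
    simp only [mem_powersetCard, subset_erase, mem_filter] at hT ⊢
    exact ⟨⟨(erase_subset i T).trans hT.1.1, notMem_erase i T⟩,
      by rw [card_erase_of_mem hT.2, hT.1.2]; rfl⟩
  · intro S hS
    simp only [mem_powersetCard, subset_erase] at hS
    exact erase_insert hS.1.2
  · intro T hT
    simp only [mem_filter] at hT
    exact insert_erase hT.2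

theorem sum_sum_powersetCard_erase (A : Finset α) (m : ℕ) (h : Finset α → M) :
    ∑ i ∈ A, ∑ S ∈ (A.erase i).powersetCard m, h S
      = (#A - m) • ∑ S ∈ A.powersetCard m, h S := by
  simp only [powersetCard_erase_eq_filter, sum_sum_filter_eq_sum_card_nsmul, smul_sum]
  refine sum_congr rfl fun S hS => ?_
  rw [mem_powersetCard] at hS
  rw [filter_notMem_eq_sdiff, card_sdiff_of_subset hS.1, hS.2]

theorem sum_sum_powersetCard_erase_insert (A : Finset α) (m : ℕ) (h : Finset α → M) :
    ∑ i ∈ A, ∑ S ∈ (A.erase i).powersetCard m, h (insert i S)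
      = (m + 1) • ∑ T ∈ A.powersetCard (m + 1), h T := by
  rw [sum_congr rfl fun i hi => sum_powersetCard_erase_insert A hi m h,
    sum_sum_filter_eq_sum_card_nsmul, smul_sum]
  refine sum_congr rfl fun T hT => ?_
  rw [mem_powersetCard] at hT
  rw [filter_mem_eq_inter, inter_eq_right.mpr hT.1, hT.2]

end DoubleCounting

/- Each side counts the triples `(i, j, S)` with `i ≠ j` in a `(p + 2)`-set and `S` an `m`-subset of
the rest, the left one through `S ∪ {i, j}`, `S ∪ {i}` and `S` respectively. -/
theorem choose_add_two_add_two_mul (p m : ℕ) :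
    (p + 2).choose (m + 2) * ((m + 2) * (m + 1)) = (p + 2) * (p + 1) * p.choose m := by
  have h₁ := Nat.add_one_mul_choose_eq (p + 1) (m + 1)
  have h₀ := Nat.add_one_mul_choose_eq p m
  calc (p + 2).choose (m + 2) * ((m + 2) * (m + 1))
      = (p + 2) * (p + 1).choose (m + 1) * (m + 1) := by rw [h₁]; ring
    _ = (p + 2) * (p + 1) * p.choose m := by rw [mul_assoc, ← h₀, mul_assoc]

theorem choose_add_two_add_one_mul (p m : ℕ) :
    (p + 2).choose (m + 1) * ((p + 1 - m) * (m + 1)) = (p + 2) * (p + 1) * p.choose m := by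
  have h₁ : (p + 2) * (p + 1).choose m = (p + 2).choose (m + 1) * (m + 1) :=
    Nat.add_one_mul_choose_eq (p + 1) m
  have h₀ := Nat.choose_mul_succ_eq p m
  calc (p + 2).choose (m + 1) * ((p + 1 - m) * (m + 1))
      = (p + 2) * (p + 1).choose m * (p + 1 - m) := by rw [h₁]; ring
    _ = (p + 2) * ((p + 1).choose m * (p + 1 - m)) := by ring
    _ = (p + 2) * (p + 1) * p.choose m := by rw [← h₀]; ring

theorem choose_add_two_mul (p m : ℕ) :
    (p + 2).choose m * ((p + 2 - m) * (p + 1 - m)) = (p + 2) * (p + 1) * p.choose m := by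
  have h₁ := Nat.choose_mul_succ_eq (p + 1) m
  have h₀ := Nat.choose_mul_succ_eq p m
  calc (p + 2).choose m * ((p + 2 - m) * (p + 1 - m))
      = (p + 2) * ((p + 1).choose m * (p + 1 - m)) := by rw [← mul_assoc, ← h₁]; ring
    _ = (p + 2) * (p + 1) * p.choose m := by rw [← h₀]; ring

section OrderedPairs

variable {N M : Type*} [Fintype N] [DecidableEq N] [AddCommMonoid M]

theorem sum_pairs_sum_powersetCard_union_pair (m : ℕ) (h : Finset N → M) :
    ∑ i, ∑ j ∈ univ.erase i, ∑ S ∈ (univ \ {i, j}).powersetCard m, h (S ∪ {i, j})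
      = ((m + 2) * (m + 1)) • ∑ T ∈ univ.powersetCard (m + 2), h T := by
  simp only [sdiff_pair_eq_erase_erase, union_insert, union_singleton]
  rw [sum_congr rfl fun i _ =>
      sum_sum_powersetCard_erase_insert (univ.erase i) m fun U => h (insert i U),
    ← smul_sum, sum_sum_powersetCard_erase_insert, smul_smul, mul_comm]

theorem sum_pairs_sum_powersetCard_union_left (m : ℕ) (h : Finset N → M) :
    ∑ i, ∑ j ∈ univ.erase i, ∑ S ∈ (univ \ {i, j}).powersetCard m, h (S ∪ {i})
      = ((Fintype.card N - 1 - m) * (m + 1)) • ∑ T ∈ univ.powersetCard (m + 1), h T := by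
  simp only [sdiff_pair_eq_erase_erase, union_singleton]
  rw [sum_congr rfl fun i _ =>
      sum_sum_powersetCard_erase (univ.erase i) m fun S => h (insert i S)]
  simp only [card_erase_of_mem (mem_univ _), card_univ]
  rw [← smul_sum, sum_sum_powersetCard_erase_insert, smul_smul]

theorem sum_pairs_sum_powersetCard_union_right (m : ℕ) (h : Finset N → M) :
    ∑ i, ∑ j ∈ univ.erase i, ∑ S ∈ (univ \ {i, j}).powersetCard m, h (S ∪ {j})
      = ((Fintype.card N - 1 - m) * (m + 1)) • ∑ T ∈ univ.powersetCard (m + 1), h T := by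
  rw [sum_sum_erase_comm, ← sum_pairs_sum_powersetCard_union_left m h]
  exact sum_congr rfl fun i _ => sum_congr rfl fun j _ => by rw [pair_comm]

theorem sum_pairs_sum_powersetCard (m : ℕ) (h : Finset N → M) :
    ∑ i, ∑ j ∈ univ.erase i, ∑ S ∈ (univ \ {i, j}).powersetCard m, h S
      = ((Fintype.card N - m) * (Fintype.card N - 1 - m)) • ∑ T ∈ univ.powersetCard m, h T := by
  simp only [sdiff_pair_eq_erase_erase]
  rw [sum_congr rfl fun i _ => sum_sum_powersetCard_erase (univ.erase i) m h]
  simp only [card_erase_of_mem (mem_univ _), card_univ]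
  rw [← smul_sum, sum_sum_powersetCard_erase, smul_smul, card_univ, mul_comm]

end OrderedPairs

section LayerAverage

variable {N : Type*} [Fintype N]

noncomputable def layerAverage (f : Finset N → ℝ) (k : ℕ) : ℝ :=
  (∑ T ∈ univ.powersetCard k, f T) / (Fintype.card N).choose k

theorem sum_powersetCard_eq_choose_mul_layerAverage (f : Finset N → ℝ) (k : ℕ) :
    ∑ T ∈ univ.powersetCard k, f T = (Fintype.card N).choose k * layerAverage f k := by
  rcases eq_or_ne ((Fintype.card N).choose k : ℝ) 0 with h | h
  · have : univ.powersetCard k = (∅ : Finset (Finset N)) := by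
      rw [← card_eq_zero, card_powersetCard, card_univ]
      exact_mod_cast h
    simp [this, layerAverage]
  · rw [layerAverage, mul_div_cancel₀ _ h]

theorem layerAverage_zero (f : Finset N → ℝ) : layerAverage f 0 = f ∅ := by
  simp [layerAverage]

theorem layerAverage_card (f : Finset N → ℝ) : layerAverage f (Fintype.card N) = f univ := by
  simp [layerAverage, ← card_univ, powersetCard_self]

theorem card_mul_layerAverage_one (f : Finset N → ℝ) :
    Fintype.card N * layerAverage f 1 = ∑ i, f {i} := by
  rw [← Nat.choose_one_right (Fintype.card N), ← sum_powersetCard_eq_choose_mul_layerAverage,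
    powersetCard_one, sum_map]
  rfl

end LayerAverage

theorem sum_range_mul_second_difference (g : ℕ → ℝ) (n : ℕ) :
    ∑ m ∈ range (n - 1), ((n : ℝ) - 1 - m) * (g (m + 2) - 2 * g (m + 1) + g m)
      = g n - n * g 1 + (n - 1) * g 0 := by
  obtain _ | q := n
  · simp
  simp only [Nat.add_sub_cancel, Nat.cast_succ, add_sub_cancel_right]
  induction q with
  | zero => simp
  | succ q ih =>
    have hΔ : ∑ m ∈ range (q + 1), (g (m + 2) - 2 * g (m + 1) + g m)
        = g (q + 2) - g (q + 1) - g 1 + g 0 := by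
      rw [sum_congr rfl fun m _ => (by ring :
          g (m + 2) - 2 * g (m + 1) + g m = (g (m + 1 + 1) - g (m + 1)) - (g (m + 1) - g m)),
        sum_range_sub (fun m => g (m + 1) - g m)]
      ring
    rw [sum_congr rfl fun (m : ℕ) _ => (by push_cast; ring :
        (((q + 1 : ℕ) : ℝ) - m) * (g (m + 2) - 2 * g (m + 1) + g m)
          = (q - m) * (g (m + 2) - 2 * g (m + 1) + g m) + (g (m + 2) - 2 * g (m + 1) + g m)),
      sum_add_distrib, hΔ, sum_range_succ, ih]
    push_cast
    ring

theorem sum_pairs_interaction {N : Type*} [Fintype N] [DecidableEq N] (f : Finset N → ℝ)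
    {m : ℕ} (hm : m + 2 ≤ Fintype.card N) :
    ∑ i, ∑ j ∈ univ.erase i, interaction f m i j
      = Fintype.card N * (Fintype.card N - 1)
          * (layerAverage f (m + 2) - 2 * layerAverage f (m + 1) + layerAverage f m) := by
  obtain ⟨p, hp⟩ : ∃ p, Fintype.card N = p + 2 := ⟨Fintype.card N - 2, by omega⟩
  simp only [interaction, ← mul_sum, sum_add_distrib, sum_sub_distrib]
  rw [sum_pairs_sum_powersetCard_union_pair, sum_pairs_sum_powersetCard_union_left,
    sum_pairs_sum_powersetCard_union_right, sum_pairs_sum_powersetCard]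
  simp only [nsmul_eq_mul, sum_powersetCard_eq_choose_mul_layerAverage, hp,
    show p + 2 - 1 - m = p + 1 - m by omega, Nat.add_sub_cancel]
  have hC : (p.choose m : ℝ) ≠ 0 := by exact_mod_cast (Nat.choose_pos (by omega)).ne'
  have h₂ : ((p + 2).choose (m + 2) * ((m + 2) * (m + 1)) : ℝ)
      = (p + 2) * (p + 1) * p.choose m := by exact_mod_cast choose_add_two_add_two_mul p m
  have h₁ : ((p + 2).choose (m + 1) * (((p + 1 - m : ℕ) : ℝ) * (m + 1)) : ℝ)
      = (p + 2) * (p + 1) * p.choose m := by exact_mod_cast choose_add_two_add_one_mul p m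
  have h₀ : ((p + 2).choose m * (((p + 2 - m : ℕ) : ℝ) * ((p + 1 - m : ℕ) : ℝ)) : ℝ)
      = (p + 2) * (p + 1) * p.choose m := by exact_mod_cast choose_add_two_mul p m
  rw [inv_mul_eq_iff_eq_mul₀ hC]
  push_cast
  linear_combination layerAverage f (m + 2) * h₂ - 2 * layerAverage f (m + 1) * h₁
    + layerAverage f m * h₀

theorem interaction_efficiency_general {N : Type*} [Fintype N] [DecidableEq N]
    (f : Finset N → ℝ) :
    f Finset.univ - f ∅
      = (∑ i : N, (f {i} - f ∅))
        + ∑ i : N, ∑ j ∈ Finset.univ.erase i,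
            ∑ m ∈ Finset.range (Fintype.card N - 1),
              (((Fintype.card N : ℝ) - 1 - m) /
                ((Fintype.card N : ℝ) * ((Fintype.card N : ℝ) - 1)))
                * interaction f m i j := by
  set n := Fintype.card N with hn_def
  have hterm : ∀ m ∈ range (n - 1),
      ∑ i, ∑ j ∈ univ.erase i, ((n : ℝ) - 1 - m) / (n * (n - 1)) * interaction f m i j
        = ((n : ℝ) - 1 - m)
            * (layerAverage f (m + 2) - 2 * layerAverage f (m + 1) + layerAverage f m) := by
    intro m hm
    have hmn : m + 2 ≤ n := by rw [mem_range] at hm; omega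
    have hn : (2 : ℝ) ≤ n := by exact_mod_cast le_of_add_le_right hmn
    have hn₀ : (n : ℝ) ≠ 0 := by linarith
    have hn₁ : (n : ℝ) - 1 ≠ 0 := by linarith
    simp only [← mul_sum]
    rw [sum_pairs_interaction f hmn, ← hn_def]
    field_simp
  rw [sum_congr rfl fun i _ => sum_comm, sum_comm, sum_congr rfl hterm,
    sum_range_mul_second_difference, layerAverage_card, layerAverage_zero,
    card_mul_layerAverage_one, sum_sub_distrib, sum_const, card_univ, nsmul_eq_mul]
  ring

theorem interaction_efficiency {N : Type*} [Fintype N] [DecidableEq N]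
    (f : Finset N → ℝ) (hn : 2 ≤ Fintype.card N) :
    f Finset.univ - f ∅
      = (∑ i : N, (f {i} - f ∅))
        + ∑ i : N, ∑ j ∈ Finset.univ.erase i,
            ∑ m ∈ Finset.range (Fintype.card N - 1),
              (((Fintype.card N : ℝ) - 1 - m) /
                ((Fintype.card N : ℝ) * ((Fintype.card N : ℝ) - 1)))
                * interaction f m i j :=
  interaction_efficiency_general f
end
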